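/- arXiv:1403.0372 — 2 statements merged into one kernel-verified Lean document; each statement's English description precedes it below -/
import Mathlib

section
/- Let 1<p,q<∞ and let u ∈ A_{p,q}^-(ℝ). Then for all a ∈ ℝ and r > 0, (∫_{a-r}^a u^q) / (∫_{a-2r}^a u^q) ≤ ‖u‖_{A_{p,q}^-(ℝ)} / (‖u‖_{A_{p,q}^-(ℝ)} + 1). Similarly, if u ∈ A_{p,q}^+(ℝ), then for all a ∈ ℝ and r > 0, (∫_a^{a+r} u^q) / (∫_a^{a+2r} u^q) ≤ ‖u‖_{A_{p,q}^+(ℝ)} / (‖u‖_{A_{p,q}^+(ℝ)} + 1). -/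
open MeasureTheory Set Filter
open scoped ENNReal

noncomputable section
open MeasureTheory Set Filter
open scoped ENNReal

noncomputable section

/-- A weight on `ℝ`: an a.e. positive, locally integrable function. -/
def IsWeight (w : ℝ → ℝ) : Prop :=
  (∀ᵐ x : ℝ, 0 < w x) ∧ MeasureTheory.LocallyIntegrable w MeasureTheory.volume

/-- `∫_a^b w` as a lower integral. -/
def lintIoc (w : ℝ → ℝ) (a b : ℝ) : ℝ≥0∞ :=
  ∫⁻ t in Set.Ioc a b, ENNReal.ofReal (w t)

/-- Average `(1/(b-a)) ∫_a^b w`. -/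
def avgIoc (w : ℝ → ℝ) (a b : ℝ) : ℝ≥0∞ :=
  (ENNReal.ofReal (b - a))⁻¹ * lintIoc w a b

/-- The one-sided `A_{p,q}^-` characteristic:
`sup_{x,h>0} ((1/h)∫_x^{x+h} u^q)((1/h)∫_{x-h}^x u^{-p'})^{q/p'}`, `p' = p/(p-1)`. -/
def apqMinusChar (p q : ℝ) (u : ℝ → ℝ) : ℝ≥0∞ :=
  ⨆ (x : ℝ) (h : ℝ) (_ : 0 < h),
    avgIoc (fun t => u t ^ q) x (x + h) *
      avgIoc (fun t => u t ^ (-(p / (p - 1)))) (x - h) x ^ (q / (p / (p - 1)))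

/-- The one-sided `A_{p,q}^+` characteristic:
`sup_{x,h>0} ((1/h)∫_{x-h}^x u^q)((1/h)∫_x^{x+h} u^{-p'})^{q/p'}`, `p' = p/(p-1)`. -/
def apqPlusChar (p q : ℝ) (u : ℝ → ℝ) : ℝ≥0∞ :=
  ⨆ (x : ℝ) (h : ℝ) (_ : 0 < h),
    avgIoc (fun t => u t ^ q) (x - h) x *
      avgIoc (fun t => u t ^ (-(p / (p - 1)))) x (x + h) ^ (q / (p / (p - 1)))

/-! Hölder's inequality on an interval `I` gives
`|I| ^ (1 + q/p') ≤ (∫_I u^q) (∫_I u^(-p')) ^ (q/p')`. Together with the `A_{p,q}^-` condition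
for `I` and the interval `J` of the same length adjacent to it on the right, this yields
`∫_J u^q ≤ N ∫_I u^q`, i.e. `∫_J u^q / (∫_I u^q + ∫_J u^q) ≤ N / (N + 1)`.
The `A_{p,q}^+` case is the mirror image, with `J` on the left of `I`. -/

theorem measure_univ_rpow_le_lintegral_mul_lintegral_rpow_neg {α : Type*} [MeasurableSpace α]
    (μ : Measure α) {F : α → ℝ≥0∞} (hF : AEMeasurable F μ) (hF0 : ∀ᵐ x ∂μ, F x ≠ 0)
    (hFtop : ∀ᵐ x ∂μ, F x ≠ ∞) {σ : ℝ} (hσ : 0 < σ) :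
    μ univ ^ (σ + 1) ≤ (∫⁻ x, F x ∂μ) * (∫⁻ x, F x ^ (-σ⁻¹) ∂μ) ^ σ := by
  have hP : 0 < σ + 1 := by linarith
  have hPQ : (σ + 1).HolderConjugate ((σ + 1) / σ) :=
    (Real.holderConjugate_iff_eq_conjExponent (by linarith)).2 (by rw [add_sub_cancel_right])
  -- Hölder applied to `1 = F ^ (σ + 1)⁻¹ * F ^ (-(σ + 1)⁻¹)`
  have hone : ∀ᵐ x ∂μ, (fun x => F x ^ (σ + 1)⁻¹ * F x ^ (-(σ + 1)⁻¹)) x = 1 := by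
    filter_upwards [hF0, hFtop] with x h0 htop
    rw [← ENNReal.rpow_add _ _ h0 htop, add_neg_cancel, ENNReal.rpow_zero]
  have hHolder := ENNReal.lintegral_mul_le_Lp_mul_Lq μ hPQ (hF.pow_const (σ + 1)⁻¹)
    (hF.pow_const (-(σ + 1)⁻¹))
  have hfirst : ∀ x, (F x ^ (σ + 1)⁻¹) ^ (σ + 1) = F x := fun x => by
    rw [← ENNReal.rpow_mul, inv_mul_cancel₀ hP.ne', ENNReal.rpow_one]
  have hsecond : ∀ x, (F x ^ (-(σ + 1)⁻¹)) ^ ((σ + 1) / σ) = F x ^ (-σ⁻¹) := fun x => by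
    rw [← ENNReal.rpow_mul]; congr 1; field_simp
  simp only [Pi.mul_apply, lintegral_congr_ae hone, lintegral_one, hfirst, hsecond] at hHolder
  calc μ univ ^ (σ + 1)
      ≤ ((∫⁻ x, F x ∂μ) ^ (1 / (σ + 1)) *
          (∫⁻ x, F x ^ (-σ⁻¹) ∂μ) ^ (1 / ((σ + 1) / σ))) ^ (σ + 1) :=
        ENNReal.rpow_le_rpow hHolder hP.le
    _ = (∫⁻ x, F x ∂μ) * (∫⁻ x, F x ^ (-σ⁻¹) ∂μ) ^ σ := by
        rw [ENNReal.mul_rpow_of_nonneg _ _ hP.le, ← ENNReal.rpow_mul, ← ENNReal.rpow_mul,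
          one_div_mul_cancel hP.ne', ENNReal.rpow_one, one_div_div, div_mul_cancel₀ σ hP.ne']

theorem ENNReal.div_add_le_div_add_one {N A C : ℝ≥0∞} (hN : N ≠ ∞) (h : A ≤ N * C) :
    A / (C + A) ≤ N / (N + 1) := by
  rcases eq_or_ne A 0 with rfl | hA
  · simp
  by_cases htop : C + A = ∞
  · simp [htop]
  have hN1 : N + 1 ≠ ∞ := ENNReal.add_ne_top.2 ⟨hN, ENNReal.one_ne_top⟩
  rw [ENNReal.div_le_iff (by simp [hA]) htop, div_eq_mul_inv, mul_right_comm, ← div_eq_mul_inv,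
    ENNReal.le_div_iff_mul_le (Or.inl (by simp)) (Or.inl hN1)]
  calc A * (N + 1) = A * N + A := by rw [mul_add, mul_one]
    _ ≤ A * N + N * C := by gcongr
    _ = N * (C + A) := by ring

theorem lintIoc_add (w : ℝ → ℝ) {a b c : ℝ} (hab : a ≤ b) (hbc : b ≤ c) :
    lintIoc w a c = lintIoc w a b + lintIoc w b c := by
  rw [lintIoc, ← Ioc_union_Ioc_eq_Ioc hab hbc,
    lintegral_union measurableSet_Ioc (Ioc_disjoint_Ioc_of_le le_rfl)]
  rfl

theorem lintIoc_ne_zero {w : ℝ → ℝ} (hw : ∀ᵐ x, 0 < w x) (hwm : AEMeasurable w) {a b : ℝ}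
    (hab : a < b) : lintIoc w a b ≠ 0 := by
  rw [lintIoc, Ne, setLIntegral_eq_zero_iff' measurableSet_Ioc hwm.ennreal_ofReal.restrict]
  intro hzero
  have hnull : volume (Ioc a b) = 0 := by
    rw [measure_eq_zero_iff_ae_notMem]
    filter_upwards [hzero, hw] with x hx hwx hmem
    exact (ENNReal.ofReal_pos.2 hwx).ne' (hx hmem)
  rw [Real.volume_Ioc, ENNReal.ofReal_eq_zero] at hnull
  linarith

theorem ofReal_sub_rpow_le_lintIoc_mul_lintIoc_rpow_neg {u : ℝ → ℝ} (hu : ∀ᵐ x, 0 < u x)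
    (hum : AEMeasurable u) {q s : ℝ} (hq : 0 < q) (hs : 0 < s) (c d : ℝ) :
    ENNReal.ofReal (d - c) ^ (q / s + 1) ≤
      lintIoc (fun t => u t ^ q) c d * lintIoc (fun t => u t ^ (-s)) c d ^ (q / s) := by
  have hu' : ∀ᵐ t ∂volume.restrict (Ioc c d), 0 < u t := ae_restrict_of_ae hu
  have hHolder := measure_univ_rpow_le_lintegral_mul_lintegral_rpow_neg (volume.restrict (Ioc c d))
    (F := fun t => ENNReal.ofReal (u t ^ q)) (hum.pow_const q).ennreal_ofReal.restrict
    (by filter_upwards [hu'] with t ht using (ENNReal.ofReal_pos.2 (Real.rpow_pos_of_pos ht q)).ne')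
    (Eventually.of_forall fun _ => ENNReal.ofReal_ne_top) (div_pos hq hs)
  rw [Measure.restrict_apply_univ, Real.volume_Ioc] at hHolder
  have hneg : lintIoc (fun t => u t ^ (-s)) c d =
      ∫⁻ t in Ioc c d, ENNReal.ofReal (u t ^ q) ^ (-(q / s)⁻¹) := by
    refine lintegral_congr_ae ?_
    filter_upwards [hu'] with t ht
    rw [ENNReal.ofReal_rpow_of_pos (Real.rpow_pos_of_pos ht q), ← Real.rpow_mul ht.le]
    congr 2
    field_simp
  rwa [hneg]

theorem lintIoc_le_mul_lintIoc_of_avgIoc_mul_le {u : ℝ → ℝ} (hu : ∀ᵐ x, 0 < u x)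
    (hum : AEMeasurable u) {q s : ℝ} (hq : 0 < q) (hs : 0 < s) {c d e f : ℝ} (hcd : c < d)
    (hlen : f - e = d - c) {N : ℝ≥0∞} (hN : N ≠ ∞)
    (hchar : avgIoc (fun t => u t ^ q) e f * avgIoc (fun t => u t ^ (-s)) c d ^ (q / s) ≤ N) :
    lintIoc (fun t => u t ^ q) e f ≤ N * lintIoc (fun t => u t ^ q) c d := by
  set σ := q / s
  set m := ENNReal.ofReal (d - c)
  set A := lintIoc (fun t => u t ^ q) e f
  set D := lintIoc (fun t => u t ^ (-s)) c d
  have hσ : 0 < σ := div_pos hq hs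
  have hm0 : m ≠ 0 := (ENNReal.ofReal_pos.2 (by linarith)).ne'
  have hmtop : m ≠ ∞ := ENNReal.ofReal_ne_top
  have hD0 : D ≠ 0 := lintIoc_ne_zero (hu.mono fun t ht => Real.rpow_pos_of_pos ht _)
    (hum.pow_const _) hcd
  rw [avgIoc, avgIoc, hlen] at hchar
  have hAD : A * D ^ σ ≤ N * m ^ (σ + 1) := by
    calc A * D ^ σ = (m⁻¹ * m) * ((m ^ σ)⁻¹ * m ^ σ) * (A * D ^ σ) := by
          rw [ENNReal.inv_mul_cancel hm0 hmtop, ENNReal.inv_mul_cancel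
            (ENNReal.rpow_pos (pos_iff_ne_zero.2 hm0) hmtop).ne'
            (ENNReal.rpow_ne_top_of_nonneg hσ.le hmtop), one_mul, one_mul]
      _ = m⁻¹ * A * (m⁻¹ * D) ^ σ * m ^ (σ + 1) := by
          rw [ENNReal.mul_rpow_of_nonneg _ _ hσ.le, ENNReal.inv_rpow,
            ENNReal.rpow_add σ 1 hm0 hmtop, ENNReal.rpow_one]
          ring
      _ ≤ N * m ^ (σ + 1) := by gcongr
  have hDtop : D ≠ ∞ := by
    intro hD
    have hA0 : A ≠ 0 := lintIoc_ne_zero (hu.mono fun t ht => Real.rpow_pos_of_pos ht _)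
      (hum.pow_const _) (by linarith)
    rw [hD, ENNReal.top_rpow_of_pos hσ, ENNReal.mul_top hA0] at hAD
    exact ENNReal.mul_ne_top hN (ENNReal.rpow_ne_top_of_nonneg (by linarith) hmtop)
      (top_le_iff.1 hAD)
  refine (ENNReal.mul_le_mul_iff_left (ENNReal.rpow_pos (pos_iff_ne_zero.2 hD0) hDtop).ne'
    (ENNReal.rpow_ne_top_of_nonneg hσ.le hDtop)).1 ?_
  calc A * D ^ σ ≤ N * m ^ (σ + 1) := hAD
    _ ≤ N * (lintIoc (fun t => u t ^ q) c d * D ^ σ) :=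
        mul_le_mul_right (ofReal_sub_rpow_le_lintIoc_mul_lintIoc_rpow_neg hu hum hq hs c d) N
    _ = N * lintIoc (fun t => u t ^ q) c d * D ^ σ := (mul_assoc ..).symm

theorem avgIoc_mul_le_apqMinusChar (p q : ℝ) (u : ℝ → ℝ) (x : ℝ) {h : ℝ} (hh : 0 < h) :
    avgIoc (fun t => u t ^ q) x (x + h) *
        avgIoc (fun t => u t ^ (-(p / (p - 1)))) (x - h) x ^ (q / (p / (p - 1))) ≤
      apqMinusChar p q u :=
  le_iSup₂_of_le x h (le_iSup_of_le hh le_rfl)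

theorem avgIoc_mul_le_apqPlusChar (p q : ℝ) (u : ℝ → ℝ) (x : ℝ) {h : ℝ} (hh : 0 < h) :
    avgIoc (fun t => u t ^ q) (x - h) x *
        avgIoc (fun t => u t ^ (-(p / (p - 1)))) x (x + h) ^ (q / (p / (p - 1))) ≤
      apqPlusChar p q u :=
  le_iSup₂_of_le x h (le_iSup_of_le hh le_rfl)

/-- If `u ∈ A_{p,q}^-(ℝ)`, then `(∫_{a-r}^a u^q)/(∫_{a-2r}^a u^q) ≤ N/(N+1)` with
`N = ‖u‖_{A_{p,q}^-}`; similarly, if `u ∈ A_{p,q}^+(ℝ)`, then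
`(∫_a^{a+r} u^q)/(∫_a^{a+2r} u^q) ≤ N/(N+1)` with `N = ‖u‖_{A_{p,q}^+}`. -/
theorem stmt5 (p q : ℝ) (hp : 1 < p) (hq : 1 < q) (u : ℝ → ℝ) (hu : IsWeight u) :
    (apqMinusChar p q u ≠ ∞ →
      ∀ a r : ℝ, 0 < r →
        lintIoc (fun t => u t ^ q) (a - r) a /
            lintIoc (fun t => u t ^ q) (a - 2 * r) a ≤
          apqMinusChar p q u / (apqMinusChar p q u + 1)) ∧
    (apqPlusChar p q u ≠ ∞ →
      ∀ a r : ℝ, 0 < r →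
        lintIoc (fun t => u t ^ q) a (a + r) /
            lintIoc (fun t => u t ^ q) a (a + 2 * r) ≤
          apqPlusChar p q u / (apqPlusChar p q u + 1)) := by
  have hq0 : 0 < q := by linarith
  have hp' : 0 < p / (p - 1) := div_pos (by linarith) (by linarith)
  have hum : AEMeasurable u := hu.2.aestronglyMeasurable.aemeasurable
  constructor
  · intro hN a r hr
    have hchar := avgIoc_mul_le_apqMinusChar p q u (a - r) hr
    rw [sub_add_cancel, sub_sub, ← two_mul] at hchar
    rw [lintIoc_add _ (by linarith : a - 2 * r ≤ a - r) (by linarith)]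
    exact ENNReal.div_add_le_div_add_one hN <| lintIoc_le_mul_lintIoc_of_avgIoc_mul_le hu.1 hum
      hq0 hp' (by linarith) (by ring) hN hchar
  · intro hN a r hr
    have hchar := avgIoc_mul_le_apqPlusChar p q u (a + r) hr
    rw [add_sub_cancel_right, add_assoc, ← two_mul] at hchar
    rw [lintIoc_add _ (by linarith : a ≤ a + r) (by linarith : a + r ≤ a + 2 * r),
      add_comm (lintIoc _ a (a + r))]
    exact ENNReal.div_add_le_div_add_one hN <| lintIoc_le_mul_lintIoc_of_avgIoc_mul_le hu.1 hum
      hq0 hp' (by linarith) (by ring) hN hchar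
end
end
end

section
/- Let 0<α<1, 1<p<1/α, and q = p/(1−αp). The exponent (p'/q)(1−α) in the bound ‖M⁺_α‖_{L^p_{w^p}→L^q_{w^q}} ≤ c‖w‖_{A_{p,q}^+}^{(p'/q)(1-α)} is sharp in the following concrete sense: there are positive constants c₁, c₂, c₃, c₄ (depending only on p, α) such that for every ε ∈ (0,1), the weight w(x) = |1−x|^{(1-ε)/p'} satisfies c₁ ε^{-q/p'} ≤ ‖w‖_{A_{p,q}^+(ℝ)} ≤ c₂ ε^{-q/p'}, the function f(t) = (1−t)^{ε-1} χ_{(0,1)}(t) satisfies ‖wf‖_{L^p(ℝ)} ≤ c₃ ε^{-1/p}, and ‖w·M⁺_α f‖_{L^q(ℝ)} ≥ c₄ ε^{-1-1/q}. -/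
/-!
For `w = |c - x|^δ` put `γ = δ p' < 1` and `r = q/p'`, so that `w^q = |c - x|^{γ r}` and
`w^{-p'} = |c - x|^{-γ}`. Testing the `A_{p,q}^+` condition on `(c-1, c] ∪ (c, c+1]` gives
`(1 - γ)^{-r}` from below. For the upper bound: if `|c - x| ≤ 2h`, the right average is
`≲ h^{-γ}/(1-γ)` and the left one `≲ h^{γ r}`; otherwise both are comparable to powers of
`|c - x|`. In both cases the powers cancel. With `γ = 1 - ε` this is `ε^{-q/p'}`.

For `f = (1-t)^{ε-1} χ_{(0,1)}` one has `w^p f^p = (1-t)^{ε-1}` on `(0,1)`, so `‖wf‖_p^p = 1/ε`,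
while `M⁺_α f(x) ≥ (1-x)^{α-1+ε}/ε` (take `h = 1 - x`). Since `q(1-α) = 1 + q/p'`,
`(w M⁺_α f)^q ≥ ε^{-q} (1-x)^{ε(1+αq)-1}` on `(0,1)`, whose integral is `ε^{-q-1}/(1+αq)`.
-/

open MeasureTheory Set Filter
open scoped ENNReal

noncomputable section

/-- Weighted `L^p` "norm" `(∫ g^p w)^{1/p}` of an `ℝ≥0∞`-valued function. -/
def lnormW (p : ℝ) (w : ℝ → ℝ) (g : ℝ → ℝ≥0∞) : ℝ≥0∞ :=
  (∫⁻ x : ℝ, g x ^ p * ENNReal.ofReal (w x)) ^ (1 / p)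

/-- One-sided fractional maximal operator
`M⁺_α f(x) = sup_{h>0} h^{α-1} ∫_x^{x+h} |f|`. -/
def MplusAlpha (α : ℝ) (f : ℝ → ℝ) (x : ℝ) : ℝ≥0∞ :=
  ⨆ (h : ℝ) (_ : 0 < h),
    ENNReal.ofReal (h ^ (α - 1)) * ∫⁻ t in Set.Ioc x (x + h), ENNReal.ofReal |f t|

lemma lintegral_Ioo_sub_rpow {a b : ℝ} (r : ℝ) (hab : a ≤ b) (hr : -1 < r) :
    ∫⁻ t in Ioo a b, ENNReal.ofReal ((b - t) ^ r) =
      ENNReal.ofReal ((b - a) ^ (r + 1) / (r + 1)) := by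
  have hint : IntervalIntegrable (fun t => (b - t) ^ r) volume a b := by
    simpa using
      (intervalIntegral.intervalIntegrable_rpow' (a := b - a) (b := 0) hr).comp_sub_left b
  rw [setLIntegral_congr Ioo_ae_eq_Ioc, ← ofReal_integral_eq_lintegral_ofReal hint.1
      ((ae_restrict_iff' measurableSet_Ioc).2 (ae_of_all _ fun t ht =>
        Real.rpow_nonneg (by linarith [ht.2]) r)),
    ← intervalIntegral.integral_of_le hab,
    intervalIntegral.integral_comp_sub_left (fun t => t ^ r) b, sub_self,
    integral_rpow (Or.inl hr), Real.zero_rpow (by linarith), sub_zero]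

lemma lintegral_Ioo_rpow_sub {a b : ℝ} (r : ℝ) (hab : a ≤ b) (hr : -1 < r) :
    ∫⁻ t in Ioo a b, ENNReal.ofReal ((t - a) ^ r) =
      ENNReal.ofReal ((b - a) ^ (r + 1) / (r + 1)) := by
  have hint : IntervalIntegrable (fun t => (t - a) ^ r) volume a b := by
    simpa using
      (intervalIntegral.intervalIntegrable_rpow' (a := 0) (b := b - a) hr).comp_sub_right a
  rw [setLIntegral_congr Ioo_ae_eq_Ioc, ← ofReal_integral_eq_lintegral_ofReal hint.1
      ((ae_restrict_iff' measurableSet_Ioc).2 (ae_of_all _ fun t ht =>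
        Real.rpow_nonneg (by linarith [ht.1]) r)),
    ← intervalIntegral.integral_of_le hab,
    intervalIntegral.integral_comp_sub_right (fun t => t ^ r) a, sub_self,
    integral_rpow (Or.inl hr), Real.zero_rpow (by linarith), sub_zero]

lemma lintegral_Ioc_abs_sub_right_rpow {a b : ℝ} (r : ℝ) (hab : a ≤ b) (hr : -1 < r) :
    ∫⁻ t in Ioc a b, ENNReal.ofReal (|b - t| ^ r) =
      ENNReal.ofReal ((b - a) ^ (r + 1) / (r + 1)) := by
  rw [← setLIntegral_congr Ioo_ae_eq_Ioc, ← lintegral_Ioo_sub_rpow r hab hr]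
  refine setLIntegral_congr_fun measurableSet_Ioo fun t ht => ?_
  rw [abs_of_pos (sub_pos.2 ht.2)]

lemma lintegral_Ioc_abs_sub_left_rpow {a b : ℝ} (r : ℝ) (hab : a ≤ b) (hr : -1 < r) :
    ∫⁻ t in Ioc a b, ENNReal.ofReal (|a - t| ^ r) =
      ENNReal.ofReal ((b - a) ^ (r + 1) / (r + 1)) := by
  rw [← setLIntegral_congr Ioo_ae_eq_Ioc, ← lintegral_Ioo_rpow_sub r hab hr]
  refine setLIntegral_congr_fun measurableSet_Ioo fun t ht => ?_
  rw [abs_sub_comm, abs_of_pos (sub_pos.2 ht.1)]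

lemma avgIoc_le_of_lintIoc_le {g : ℝ → ℝ} {a b C : ℝ} (hab : a < b)
    (hg : lintIoc g a b ≤ ENNReal.ofReal C * ENNReal.ofReal (b - a)) :
    avgIoc g a b ≤ ENNReal.ofReal C := by
  have hba : ENNReal.ofReal (b - a) ≠ 0 := (ENNReal.ofReal_pos.2 (sub_pos.2 hab)).ne'
  calc avgIoc g a b ≤ (ENNReal.ofReal (b - a))⁻¹ * (ENNReal.ofReal C * ENNReal.ofReal (b - a)) :=
        mul_le_mul_right hg _
    _ = ENNReal.ofReal C := by
        rw [mul_comm (ENNReal.ofReal C), ← mul_assoc,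
          ENNReal.inv_mul_cancel hba ENNReal.ofReal_ne_top, one_mul]

lemma avgIoc_le_of_forall_le {g : ℝ → ℝ} {a b C : ℝ} (hab : a < b)
    (hg : ∀ t ∈ Ioc a b, g t ≤ C) : avgIoc g a b ≤ ENNReal.ofReal C := by
  refine avgIoc_le_of_lintIoc_le hab ?_
  calc lintIoc g a b ≤ ∫⁻ _ in Ioc a b, ENNReal.ofReal C :=
        setLIntegral_mono measurable_const fun t ht => ENNReal.ofReal_le_ofReal (hg t ht)
    _ = ENNReal.ofReal C * ENNReal.ofReal (b - a) := by rw [setLIntegral_const, Real.volume_Ioc]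

lemma avgIoc_abs_sub_rpow_le (c x : ℝ) {β h : ℝ} (hβ : 0 ≤ β) (hh : 0 < h) :
    avgIoc (fun t => |c - t| ^ β) (x - h) x ≤ ENNReal.ofReal ((|c - x| + h) ^ β) := by
  refine avgIoc_le_of_forall_le (by linarith) fun t ht => Real.rpow_le_rpow (abs_nonneg _) ?_ hβ
  have hxt : |x - t| ≤ h := by rw [abs_of_nonneg (by linarith [ht.2])]; linarith [ht.1]
  calc |c - t| = |(c - x) + (x - t)| := by rw [sub_add_sub_cancel]
    _ ≤ |c - x| + h := (abs_add_le _ _).trans (by linarith)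

lemma avgIoc_abs_sub_rpow_neg_le (c x : ℝ) {γ h : ℝ} (hγ0 : 0 ≤ γ) (hγ1 : γ < 1) (hh : 0 < h) :
    avgIoc (fun t => |c - t| ^ (-γ)) x (x + h) ≤ ENNReal.ofReal (3 / (1 - γ) * h ^ (-γ)) := by
  have hγ : -1 < -γ := by linarith
  set H := h ^ (-γ) * h with hH
  have hH0 : 0 ≤ H := by positivity
  have hHγ : 0 ≤ H / (1 - γ) := div_nonneg hH0 (by linarith)
  set far := Ioc x (x + h) ∩ {t | h ≤ |c - t|}
  have hsub : Ioc x (x + h) ⊆ (Ioc (c - h) c ∪ Ioc c (c + h)) ∪ far := by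
    intro t ht
    by_cases hct : h ≤ |c - t|
    · exact Or.inr ⟨ht, hct⟩
    · rcases abs_lt.1 (not_le.1 hct) with ⟨h1, h2⟩
      rcases le_or_gt t c with htc | htc
      · exact Or.inl (Or.inl ⟨by linarith, htc⟩)
      · exact Or.inl (Or.inr ⟨htc, by linarith⟩)
  have hnear : ∫⁻ t in Ioc (c - h) c ∪ Ioc c (c + h), ENNReal.ofReal (|c - t| ^ (-γ)) =
      ENNReal.ofReal (2 * (H / (1 - γ))) := by
    rw [lintegral_union measurableSet_Ioc (Ioc_disjoint_Ioc_of_le le_rfl),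
      lintegral_Ioc_abs_sub_right_rpow _ (by linarith) hγ,
      lintegral_Ioc_abs_sub_left_rpow _ (by linarith) hγ, sub_sub_cancel, add_sub_cancel_left,
      Real.rpow_add_one hh.ne', neg_add_eq_sub, ← ENNReal.ofReal_add hHγ hHγ, two_mul]
  have hfar : ∫⁻ t in far, ENNReal.ofReal (|c - t| ^ (-γ)) ≤ ENNReal.ofReal H := by
    calc ∫⁻ t in far, ENNReal.ofReal (|c - t| ^ (-γ)) ≤ ∫⁻ _ in far, ENNReal.ofReal (h ^ (-γ)) :=
          setLIntegral_mono measurable_const fun t ht =>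
            ENNReal.ofReal_le_ofReal (Real.rpow_le_rpow_of_nonpos hh ht.2 (by linarith))
      _ ≤ ENNReal.ofReal (h ^ (-γ)) * ENNReal.ofReal h := by
          rw [setLIntegral_const]
          gcongr
          exact (measure_mono inter_subset_left).trans_eq
            (by rw [Real.volume_Ioc, add_sub_cancel_left])
      _ = ENNReal.ofReal H := (ENNReal.ofReal_mul (by positivity)).symm
  refine avgIoc_le_of_lintIoc_le (by linarith) ?_
  calc lintIoc (fun t => |c - t| ^ (-γ)) x (x + h)
      ≤ ∫⁻ t in (Ioc (c - h) c ∪ Ioc c (c + h)) ∪ far, ENNReal.ofReal (|c - t| ^ (-γ)) :=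
        lintegral_mono_set hsub
    _ ≤ ENNReal.ofReal (2 * (H / (1 - γ))) + ENNReal.ofReal H :=
        (lintegral_union_le _ _ _).trans (add_le_add hnear.le hfar)
    _ ≤ ENNReal.ofReal (3 / (1 - γ) * h ^ (-γ)) * ENNReal.ofReal (x + h - x) := by
        rw [← ENNReal.ofReal_add (by positivity) hH0, add_sub_cancel_left,
          ← ENNReal.ofReal_mul
            (mul_nonneg (div_nonneg zero_le_three (by linarith)) (by positivity))]
        refine ENNReal.ofReal_le_ofReal ?_
        have hHle : H ≤ H / (1 - γ) := le_div_self hH0 (by linarith) (by linarith)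
        have h3 : 3 / (1 - γ) * h ^ (-γ) * h = 3 * (H / (1 - γ)) := by rw [hH]; ring
        linarith

lemma avgIoc_abs_sub_rpow_neg_le_of_two_mul_le (c x : ℝ) {γ h : ℝ} (hγ : 0 ≤ γ) (hh : 0 < h)
    (hx : 2 * h ≤ |c - x|) :
    avgIoc (fun t => |c - t| ^ (-γ)) x (x + h) ≤ ENNReal.ofReal ((|c - x| / 2) ^ (-γ)) := by
  refine avgIoc_le_of_forall_le (by linarith) fun t ht =>
    Real.rpow_le_rpow_of_nonpos (by linarith) ?_ (by linarith)
  have hxt : |t - x| ≤ h := by rw [abs_of_nonneg (by linarith [ht.1])]; linarith [ht.2]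
  have := abs_add_le (c - t) (t - x)
  rw [sub_add_sub_cancel] at this
  linarith

lemma rpow_mul_mul_rpow_neg_le {A B K M γ r : ℝ} (hA : 0 ≤ A) (hB : 0 < B) (hAB : A ≤ K * B)
    (hK : 1 ≤ K) (hM : 0 ≤ M) (hγ0 : 0 ≤ γ) (hγ1 : γ ≤ 1) (hr : 0 ≤ r) :
    A ^ (γ * r) * (M * B ^ (-γ)) ^ r ≤ (K * M) ^ r := by
  have hγr : 0 ≤ γ * r := mul_nonneg hγ0 hr
  have hK0 : 0 ≤ K := zero_le_one.trans hK
  calc A ^ (γ * r) * (M * B ^ (-γ)) ^ r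
      ≤ (K * B) ^ (γ * r) * (M * B ^ (-γ)) ^ r := by gcongr
    _ = K ^ (γ * r) * M ^ r * (B ^ (γ * r) * B ^ (-γ * r)) := by
        rw [Real.mul_rpow hK0 hB.le, Real.mul_rpow hM (by positivity), ← Real.rpow_mul hB.le]
        ring
    _ = K ^ (γ * r) * M ^ r := by
        rw [← Real.rpow_add hB, neg_mul, add_neg_cancel, Real.rpow_zero, mul_one]
    _ ≤ K ^ r * M ^ r := by
        gcongr
        exact mul_le_of_le_one_left hr hγ1
    _ = (K * M) ^ r := (Real.mul_rpow hK0 hM).symm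

lemma avgIoc_mul_avgIoc_rpow_le (c x : ℝ) {γ r h : ℝ} (hγ0 : 0 ≤ γ) (hγ1 : γ < 1) (hr : 0 < r)
    (hh : 0 < h) :
    avgIoc (fun t => |c - t| ^ (γ * r)) (x - h) x * avgIoc (fun t => |c - t| ^ (-γ)) x (x + h) ^ r ≤
      ENNReal.ofReal (9 ^ r * (1 - γ) ^ (-r)) := by
  have hbound : ∀ {A B K M : ℝ}, 0 < B → |c - x| + h ≤ A → A ≤ K * B → 1 ≤ K → 0 ≤ M →
      avgIoc (fun t => |c - t| ^ (-γ)) x (x + h) ≤ ENNReal.ofReal (M * B ^ (-γ)) →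
      avgIoc (fun t => |c - t| ^ (γ * r)) (x - h) x *
        avgIoc (fun t => |c - t| ^ (-γ)) x (x + h) ^ r ≤ ENNReal.ofReal ((K * M) ^ r) := by
    intro A B K M hB hA hAB hK hM hright
    have hA0 : 0 ≤ A := by linarith [abs_nonneg (c - x)]
    calc _ ≤ ENNReal.ofReal (A ^ (γ * r)) * ENNReal.ofReal (M * B ^ (-γ)) ^ r := by
          gcongr
          exact (avgIoc_abs_sub_rpow_le c x (by positivity) hh).trans
            (ENNReal.ofReal_le_ofReal (by gcongr))
      _ ≤ ENNReal.ofReal ((K * M) ^ r) := by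
          rw [ENNReal.ofReal_rpow_of_nonneg (by positivity) hr.le,
            ← ENNReal.ofReal_mul (by positivity)]
          exact ENNReal.ofReal_le_ofReal
            (rpow_mul_mul_rpow_neg_le hA0 hB hAB hK hM hγ0 hγ1.le hr.le)
  have h1γ : 0 < 1 - γ := by linarith
  rcases le_or_gt |c - x| (2 * h) with hnear | hfar
  · refine (hbound (K := 3) hh (le_refl _) (by linarith) (by norm_num) (by positivity)
      (avgIoc_abs_sub_rpow_neg_le c x hγ0 hγ1 hh)).trans_eq ?_
    rw [← mul_div_assoc, show (3 : ℝ) * 3 = 9 by norm_num, Real.div_rpow (by norm_num) h1γ.le,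
      Real.rpow_neg h1γ.le, div_eq_mul_inv]
  · have hd : 0 < |c - x| / 2 := by linarith
    have hright := avgIoc_abs_sub_rpow_neg_le_of_two_mul_le c x hγ0 hh hfar.le
    rw [← one_mul ((|c - x| / 2) ^ (-γ))] at hright
    refine (hbound (A := 2 * |c - x|) (K := 4) hd (by linarith) (by linarith) (by norm_num)
      zero_le_one hright).trans ?_
    refine ENNReal.ofReal_le_ofReal ?_
    calc (4 * 1 : ℝ) ^ r ≤ 9 ^ r * 1 := by rw [mul_one, mul_one]; gcongr; norm_num
      _ ≤ 9 ^ r * (1 - γ) ^ (-r) := by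
          gcongr
          exact Real.one_le_rpow_of_pos_of_le_one_of_nonpos h1γ (by linarith) (by linarith)

lemma avgIoc_mul_avgIoc_rpow_center (c : ℝ) {γ r : ℝ} (hγ1 : γ < 1) (hγr : -1 < γ * r)
    (hr : 0 ≤ r) :
    avgIoc (fun t => |c - t| ^ (γ * r)) (c - 1) c * avgIoc (fun t => |c - t| ^ (-γ)) c (c + 1) ^ r =
      ENNReal.ofReal ((γ * r + 1)⁻¹ * (1 - γ) ^ (-r)) := by
  have h1γ : 0 < 1 - γ := by linarith
  simp only [avgIoc, lintIoc, sub_sub_cancel, add_sub_cancel_left, ENNReal.ofReal_one, inv_one,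
    one_mul]
  rw [lintegral_Ioc_abs_sub_right_rpow _ (by linarith) hγr,
    lintegral_Ioc_abs_sub_left_rpow _ (by linarith) (by linarith), sub_sub_cancel,
    add_sub_cancel_left, Real.one_rpow, Real.one_rpow, neg_add_eq_sub,
    ENNReal.ofReal_rpow_of_nonneg (by positivity) hr,
    ← ENNReal.ofReal_mul (div_nonneg zero_le_one (by linarith)),
    one_div, one_div, Real.inv_rpow h1γ.le, Real.rpow_neg h1γ.le]

lemma apqPlusChar_abs_sub_rpow (c : ℝ) {p q δ : ℝ} (hp : 1 < p) :
    apqPlusChar p q (fun x => |c - x| ^ δ) = ⨆ (x : ℝ) (h : ℝ) (_ : 0 < h),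
      avgIoc (fun t => |c - t| ^ (δ * p.conjExponent * (q / p.conjExponent))) (x - h) x *
        avgIoc (fun t => |c - t| ^ (-(δ * p.conjExponent))) x (x + h) ^ (q / p.conjExponent) := by
  have hp' : p.conjExponent ≠ 0 := (div_pos (by linarith) (by linarith)).ne'
  rw [mul_assoc, mul_div_cancel₀ _ hp']
  simp only [apqPlusChar, ← Real.rpow_mul (abs_nonneg _), mul_neg]
  rfl

theorem apqPlusChar_abs_sub_rpow_le (c : ℝ) {p q δ : ℝ} (hp : 1 < p) (hq : 0 < q) (hδ : 0 ≤ δ)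
    (hδp : δ * p.conjExponent < 1) :
    apqPlusChar p q (fun x => |c - x| ^ δ) ≤
      ENNReal.ofReal
        (9 ^ (q / p.conjExponent) * (1 - δ * p.conjExponent) ^ (-(q / p.conjExponent))) := by
  have hp' : 0 < p.conjExponent := div_pos (by linarith) (by linarith)
  rw [apqPlusChar_abs_sub_rpow c hp]
  exact iSup_le fun x => iSup₂_le fun h hh =>
    avgIoc_mul_avgIoc_rpow_le c x (by positivity) hδp (by positivity) hh

theorem le_apqPlusChar_abs_sub_rpow (c : ℝ) {p q δ : ℝ} (hp : 1 < p) (hq : 0 < q) (hδ : 0 ≤ δ)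
    (hδp : δ * p.conjExponent < 1) :
    ENNReal.ofReal ((δ * q + 1)⁻¹ * (1 - δ * p.conjExponent) ^ (-(q / p.conjExponent))) ≤
      apqPlusChar p q (fun x => |c - x| ^ δ) := by
  have hp' : 0 < p.conjExponent := div_pos (by linarith) (by linarith)
  have hδq : δ * q = δ * p.conjExponent * (q / p.conjExponent) := by field_simp
  rw [apqPlusChar_abs_sub_rpow c hp, hδq,
    ← avgIoc_mul_avgIoc_rpow_center c hδp (by rw [← hδq]; nlinarith) (by positivity)]
  exact le_iSup₂_of_le (f := fun x h => ⨆ _ : 0 < h, _) c 1 (le_iSup_of_le one_pos le_rfl)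

def extremalFn (ε t : ℝ) : ℝ := if t ∈ Ioo (0 : ℝ) 1 then (1 - t) ^ (ε - 1) else 0

lemma lnormW_abs_sub_rpow_extremalFn (p δ ε : ℝ) (hp : 0 < p) (ha : -1 < (ε - 1 + δ) * p) :
    lnormW p (fun x => (|1 - x| ^ δ) ^ p) (fun x => ENNReal.ofReal |extremalFn ε x|) =
      ENNReal.ofReal (((ε - 1 + δ) * p + 1)⁻¹ ^ (1 / p)) := by
  have hpt : ∀ x, ENNReal.ofReal |extremalFn ε x| ^ p * ENNReal.ofReal ((|1 - x| ^ δ) ^ p) =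
      (Ioo 0 1).indicator (fun x => ENNReal.ofReal ((1 - x) ^ ((ε - 1 + δ) * p))) x := by
    intro x
    by_cases hx : x ∈ Ioo (0 : ℝ) 1
    · have h1x : 0 < 1 - x := sub_pos.2 hx.2
      rw [indicator_of_mem hx, extremalFn, if_pos hx, abs_of_pos h1x, abs_of_nonneg (by positivity),
        ENNReal.ofReal_rpow_of_nonneg (by positivity) hp.le, ← ENNReal.ofReal_mul (by positivity),
        ← Real.rpow_mul h1x.le, ← Real.rpow_mul h1x.le, ← Real.rpow_add h1x, add_mul]
    · rw [indicator_of_notMem hx, extremalFn, if_neg hx, abs_zero, ENNReal.ofReal_zero,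
        ENNReal.zero_rpow_of_pos hp, zero_mul]
  have hA : 0 < (ε - 1 + δ) * p + 1 := by linarith
  rw [lnormW, lintegral_congr hpt, lintegral_indicator measurableSet_Ioo,
    lintegral_Ioo_sub_rpow _ zero_le_one ha, sub_zero, Real.one_rpow, ← inv_eq_one_div,
    ENNReal.ofReal_rpow_of_nonneg (inv_nonneg.2 hA.le) (by positivity)]

lemma ofReal_le_MplusAlpha_extremalFn (α : ℝ) {ε x : ℝ} (hε : 0 < ε) (hx : x ∈ Ioo (0 : ℝ) 1) :
    ENNReal.ofReal ((1 - x) ^ (α - 1 + ε) / ε) ≤ MplusAlpha α (extremalFn ε) x := by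
  have h1x : 0 < 1 - x := sub_pos.2 hx.2
  have hint : ∫⁻ t in Ioo x 1, ENNReal.ofReal |extremalFn ε t| =
      ENNReal.ofReal ((1 - x) ^ ε / ε) := by
    have := lintegral_Ioo_sub_rpow (ε - 1) hx.2.le (by linarith)
    rw [sub_add_cancel] at this
    rw [← this]
    refine setLIntegral_congr_fun measurableSet_Ioo fun t ht => ?_
    have ht' : t ∈ Ioo (0 : ℝ) 1 := ⟨hx.1.trans ht.1, ht.2⟩
    rw [extremalFn, if_pos ht', abs_of_nonneg (Real.rpow_nonneg (sub_pos.2 ht.2).le _)]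
  calc ENNReal.ofReal ((1 - x) ^ (α - 1 + ε) / ε)
      = ENNReal.ofReal ((1 - x) ^ (α - 1)) * ∫⁻ t in Ioo x 1, ENNReal.ofReal |extremalFn ε t| := by
        rw [hint, ← ENNReal.ofReal_mul (by positivity), Real.rpow_add h1x, mul_div_assoc]
    _ ≤ ENNReal.ofReal ((1 - x) ^ (α - 1)) *
          ∫⁻ t in Ioc x (x + (1 - x)), ENNReal.ofReal |extremalFn ε t| := by
        rw [add_sub_cancel]
        exact mul_le_mul_right (lintegral_mono_set Ioo_subset_Ioc_self) _
    _ ≤ MplusAlpha α (extremalFn ε) x :=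
        le_iSup₂_of_le (f := fun h _ => ENNReal.ofReal (h ^ (α - 1)) *
          ∫⁻ t in Ioc x (x + h), ENNReal.ofReal |extremalFn ε t|) (1 - x) h1x le_rfl

lemma le_lnormW_MplusAlpha_extremalFn (α q δ : ℝ) {ε : ℝ} (hq : 0 < q) (hε : 0 < ε)
    (ha : -1 < (α - 1 + ε + δ) * q) :
    ENNReal.ofReal (ε⁻¹ * ((α - 1 + ε + δ) * q + 1) ^ (-(1 / q))) ≤
      lnormW q (fun x => (|1 - x| ^ δ) ^ q) (MplusAlpha α (extremalFn ε)) := by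
  have hA : 0 < (α - 1 + ε + δ) * q + 1 := by linarith
  have hpt : ∀ x ∈ Ioo (0 : ℝ) 1, ENNReal.ofReal (ε ^ (-q)) *
      ENNReal.ofReal ((1 - x) ^ ((α - 1 + ε + δ) * q)) ≤
        MplusAlpha α (extremalFn ε) x ^ q * ENNReal.ofReal ((|1 - x| ^ δ) ^ q) := by
    intro x hx
    have h1x : 0 < 1 - x := sub_pos.2 hx.2
    calc _ = ENNReal.ofReal ((1 - x) ^ (α - 1 + ε) / ε) ^ q *
          ENNReal.ofReal ((|1 - x| ^ δ) ^ q) := by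
          rw [ENNReal.ofReal_rpow_of_nonneg (by positivity) hq.le,
            ← ENNReal.ofReal_mul (by positivity), ← ENNReal.ofReal_mul (by positivity),
            abs_of_pos h1x, Real.div_rpow (by positivity) hε.le, ← Real.rpow_mul h1x.le,
            ← Real.rpow_mul h1x.le, Real.rpow_neg hε.le, add_mul, Real.rpow_add h1x]
          ring_nf
      _ ≤ _ := by gcongr; exact ofReal_le_MplusAlpha_extremalFn α hε hx
  have hint : ENNReal.ofReal (ε ^ (-q) * ((α - 1 + ε + δ) * q + 1)⁻¹) ≤
      ∫⁻ x, MplusAlpha α (extremalFn ε) x ^ q * ENNReal.ofReal ((|1 - x| ^ δ) ^ q) :=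
    calc _ = ∫⁻ x in Ioo 0 1, ENNReal.ofReal (ε ^ (-q)) *
          ENNReal.ofReal ((1 - x) ^ ((α - 1 + ε + δ) * q)) := by
          rw [lintegral_const_mul' _ _ ENNReal.ofReal_ne_top,
            lintegral_Ioo_sub_rpow _ zero_le_one ha, sub_zero, Real.one_rpow,
            ← ENNReal.ofReal_mul (by positivity), one_div]
      _ ≤ ∫⁻ x in Ioo 0 1, MplusAlpha α (extremalFn ε) x ^ q *
          ENNReal.ofReal ((|1 - x| ^ δ) ^ q) := setLIntegral_mono' measurableSet_Ioo hpt
      _ ≤ _ := setLIntegral_le_lintegral _ _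
  calc _ = ENNReal.ofReal (ε ^ (-q) * ((α - 1 + ε + δ) * q + 1)⁻¹) ^ (1 / q) := by
        rw [ENNReal.ofReal_rpow_of_nonneg (by positivity) (by positivity),
          Real.mul_rpow (by positivity) (by positivity), ← Real.rpow_mul hε.le,
          Real.inv_rpow hA.le, ← Real.rpow_neg hA.le, neg_mul, mul_one_div_cancel hq.ne',
          Real.rpow_neg_one]
    _ ≤ _ := ENNReal.rpow_le_rpow hint (by positivity)

def extremalWeight (p ε x : ℝ) : ℝ := |1 - x| ^ ((1 - ε) * ((p - 1) / p))

section extremal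

variable {p q ε : ℝ}

lemma extremalWeight_exponent_mul_conjExponent (hp : 1 < p) :
    (1 - ε) * ((p - 1) / p) * p.conjExponent = 1 - ε := by
  have : p - 1 ≠ 0 := by linarith
  rw [Real.conjExponent]
  field_simp

lemma extremalWeight_exponent_nonneg (hp : 1 < p) (hε : ε < 1) :
    0 ≤ (1 - ε) * ((p - 1) / p) :=
  mul_nonneg (by linarith) (div_nonneg (by linarith) (by linarith))

theorem apqPlusChar_extremalWeight_le (hp : 1 < p) (hq : 0 < q) (hε0 : 0 < ε) (hε1 : ε < 1) :
    apqPlusChar p q (extremalWeight p ε) ≤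
      ENNReal.ofReal (9 ^ (q * (p - 1) / p) * ε ^ (-(q * (p - 1) / p))) := by
  have h := apqPlusChar_abs_sub_rpow_le 1 hp hq (extremalWeight_exponent_nonneg hp hε1)
    (by rw [extremalWeight_exponent_mul_conjExponent hp]; linarith)
  rwa [extremalWeight_exponent_mul_conjExponent hp, sub_sub_cancel, Real.conjExponent,
    div_div_eq_mul_div] at h

theorem le_apqPlusChar_extremalWeight (hp : 1 < p) (hq : 0 < q) (hε0 : 0 < ε) (hε1 : ε < 1) :
    ENNReal.ofReal ((q * (p - 1) / p + 1)⁻¹ * ε ^ (-(q * (p - 1) / p))) ≤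
      apqPlusChar p q (extremalWeight p ε) := by
  refine le_trans (ENNReal.ofReal_le_ofReal ?_) (le_apqPlusChar_abs_sub_rpow 1 hp hq
    (extremalWeight_exponent_nonneg hp hε1)
    (by rw [extremalWeight_exponent_mul_conjExponent hp]; linarith))
  rw [extremalWeight_exponent_mul_conjExponent hp, sub_sub_cancel, Real.conjExponent,
    div_div_eq_mul_div]
  have hδq : (1 - ε) * ((p - 1) / p) * q = (1 - ε) * (q * (p - 1) / p) := by ring
  have hr : 0 < q * (p - 1) / p := div_pos (mul_pos hq (by linarith)) (by linarith)
  gcongr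
  nlinarith

theorem lnormW_extremalWeight_mul_extremalFn (hp : 1 < p) (hε : 0 < ε) :
    lnormW p (fun x => extremalWeight p ε x ^ p) (fun x => ENNReal.ofReal |extremalFn ε x|) =
      ENNReal.ofReal (ε ^ (-(1 / p))) := by
  have hexp : (ε - 1 + (1 - ε) * ((p - 1) / p)) * p + 1 = ε := by
    field_simp
    ring
  have h := lnormW_abs_sub_rpow_extremalFn p ((1 - ε) * ((p - 1) / p)) ε (by linarith)
    (by linarith)
  rwa [hexp, Real.inv_rpow hε.le, ← Real.rpow_neg hε.le] at h

theorem le_lnormW_extremalWeight_MplusAlpha {α : ℝ} (hp : 1 < p) (hq : 0 < q)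
    (hqα : q * (1 - α) = q * (p - 1) / p + 1) (hε : 0 < ε) :
    ENNReal.ofReal ((q * α + 1) ^ (-(1 / q)) * ε ^ (-1 - 1 / q)) ≤
      lnormW q (fun x => extremalWeight p ε x ^ q) (MplusAlpha α (extremalFn ε)) := by
  have hqα' : q * α + 1 = q / p := by
    have hp0 : p ≠ 0 := by linarith
    rw [eq_div_iff hp0]
    field_simp at hqα
    linear_combination -hqα
  have hpos : 0 < q * α + 1 := hqα' ▸ div_pos hq (by linarith)
  have hexp : (α - 1 + ε + (1 - ε) * ((p - 1) / p)) * q + 1 = ε * (q * α + 1) := by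
    linear_combination (ε - 1) * hqα
  refine le_trans (le_of_eq ?_) (le_lnormW_MplusAlpha_extremalFn α q _ hq hε
    (by nlinarith [mul_pos hε hpos]))
  rw [hexp, Real.mul_rpow hε.le hpos.le, sub_eq_add_neg, Real.rpow_add hε, Real.rpow_neg_one]
  ring_nf

end extremal

theorem stmt10_general (p q α : ℝ) (hα : 0 < α) (hp : 1 < p) (hpα : p < 1 / α)
    (hq : q = p / (1 - α * p)) :
    ∃ c₁ c₂ c₃ c₄ : ℝ, 0 < c₁ ∧ 0 < c₂ ∧ 0 < c₃ ∧ 0 < c₄ ∧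
      ∀ ε : ℝ, ε ∈ Set.Ioo (0 : ℝ) 1 →
        let w : ℝ → ℝ := fun x => |1 - x| ^ ((1 - ε) * ((p - 1) / p))
        let f : ℝ → ℝ := fun t => if t ∈ Set.Ioo (0 : ℝ) 1 then (1 - t) ^ (ε - 1) else 0
        ENNReal.ofReal (c₁ * ε ^ (-(q * (p - 1) / p))) ≤ apqPlusChar p q w ∧
        apqPlusChar p q w ≤ ENNReal.ofReal (c₂ * ε ^ (-(q * (p - 1) / p))) ∧
        lnormW p (fun x => w x ^ p) (fun x => ENNReal.ofReal |f x|) ≤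
          ENNReal.ofReal (c₃ * ε ^ (-(1 / p))) ∧
        ENNReal.ofReal (c₄ * ε ^ (-1 - 1 / q)) ≤
          lnormW q (fun x => w x ^ q) (MplusAlpha α f) := by
  have hαp : α * p < 1 := by rwa [lt_div_iff₀ hα, mul_comm] at hpα
  have hq0 : 0 < q := hq ▸ div_pos (by linarith) (by linarith)
  have hqα : q * (1 - α) = q * (p - 1) / p + 1 := by
    have hqp : q * (1 - α * p) = p := by rw [hq, div_mul_cancel₀ p (by linarith)]
    field_simp
    linear_combination hqp
  refine ⟨(q * (p - 1) / p + 1)⁻¹, 9 ^ (q * (p - 1) / p), 1, (q * α + 1) ^ (-(1 / q)),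
    by positivity, by positivity, one_pos, by positivity, fun ε ⟨hε0, hε1⟩ =>
    ⟨le_apqPlusChar_extremalWeight hp hq0 hε0 hε1, apqPlusChar_extremalWeight_le hp hq0 hε0 hε1,
      (lnormW_extremalWeight_mul_extremalFn hp hε0).trans_le (by rw [one_mul]),
      le_lnormW_extremalWeight_MplusAlpha hp hq0 hqα hε0⟩⟩

/-- Sharpness of the exponent `(p'/q)(1-α)` for `M⁺_α`: with `w(x) = |1-x|^{(1-ε)/p'}`,
one has `‖w‖_{A_{p,q}^+} ≍ ε^{-q/p'}`; for `f(t) = (1-t)^{ε-1} χ_{(0,1)}(t)` one has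
`‖wf‖_{L^p} ≤ c₃ ε^{-1/p}` and `‖w M⁺_α f‖_{L^q} ≥ c₄ ε^{-1-1/q}`. -/
theorem stmt10 (p q α : ℝ) (hα : 0 < α) (hα1 : α < 1) (hp : 1 < p) (hpα : p < 1 / α)
    (hq : q = p / (1 - α * p)) :
    ∃ c₁ c₂ c₃ c₄ : ℝ, 0 < c₁ ∧ 0 < c₂ ∧ 0 < c₃ ∧ 0 < c₄ ∧
      ∀ ε : ℝ, ε ∈ Set.Ioo (0 : ℝ) 1 →
        let w : ℝ → ℝ := fun x => |1 - x| ^ ((1 - ε) * ((p - 1) / p))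
        let f : ℝ → ℝ := fun t => if t ∈ Set.Ioo (0 : ℝ) 1 then (1 - t) ^ (ε - 1) else 0
        ENNReal.ofReal (c₁ * ε ^ (-(q * (p - 1) / p))) ≤ apqPlusChar p q w ∧
        apqPlusChar p q w ≤ ENNReal.ofReal (c₂ * ε ^ (-(q * (p - 1) / p))) ∧
        lnormW p (fun x => w x ^ p) (fun x => ENNReal.ofReal |f x|) ≤
          ENNReal.ofReal (c₃ * ε ^ (-(1 / p))) ∧
        ENNReal.ofReal (c₄ * ε ^ (-1 - 1 / q)) ≤
          lnormW q (fun x => w x ^ q) (MplusAlpha α f) :=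
  stmt10_general p q α hα hp hpα hq

end
end
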